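/- Let R be essentially of finite type over an F-finite field, (M, κ) a Cartier module, and f ∈ R. Then for all λ ≥ 0: κ(τ(M, f^λ)) = τ(M, f^{λ/p}). -/

import Mathlib

/-!
Present `τ(M, f^λ)` with `e₀ = 0` and `τ(M, f^{λ/p})` with `e₀ = 1`. Since `κ` is additive, the
span of its image commutes with the sums. Since `κ (r^p m) = r κ m`, the image of a submodule under
`κ^e` is again a submodule, so `κ` sends the `e`-th summand `κ^e f^{⌈λp^e⌉} cᵢNᵢ` onto the
`(e+1)`-st summand of `τ(M, f^{λ/p})`, because `⌈(λ/p) p^{e+1}⌉ = ⌈λ p^e⌉`.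
-/

open Function

variable {R : Type*} [CommRing R] {M : Type*} [AddCommGroup M] [Module R M]

/-- The submodule `κ^e (f^n • N)`. -/
def opApply (κ : M →+ M) (f : R) (e n : ℕ) (N : Submodule R M) : Submodule R M :=
  Submodule.span R ((⇑κ)^[e] '' ((fun m => f ^ n • m) '' (N : Set M)))

namespace Submodule

variable {M' : Type*} [AddCommGroup M'] [Module R M']

theorem span_image_iSup {ι : Sort*} (φ : M →+ M') (W : ι → Submodule R M) :
    span R (φ '' ↑(⨆ i, W i)) = ⨆ i, span R (φ '' W i) := by
  refine le_antisymm (span_le.2 ?_) (iSup_le fun i => span_mono (Set.image_mono ?_))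
  · rintro _ ⟨x, hx, rfl⟩
    refine iSup_induction W (motive := fun x => φ x ∈ ⨆ i, span R (φ '' W i)) hx
      (fun i x hx => mem_iSup_of_mem i (subset_span ⟨x, hx, rfl⟩)) ?_ fun x y hx hy => ?_
    · simp
    · rw [map_add]
      exact add_mem hx hy
  · exact SetLike.coe_mono (le_iSup W i)

theorem coe_span_image_of_map_pow_smul (φ : M →+ M') (q : ℕ)
    (hφ : ∀ (r : R) (m : M), φ (r ^ q • m) = r • φ m) (W : Submodule R M) :
    (span R (φ '' W) : Set M') = φ '' W := by
  refine subset_antisymm (fun x hx => ?_) subset_span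
  induction hx using span_induction with
  | mem x hx => exact hx
  | zero => exact ⟨0, W.zero_mem, map_zero φ⟩
  | add x y _ _ hx hy =>
    obtain ⟨⟨a, ha, rfl⟩, ⟨b, hb, rfl⟩⟩ := And.intro hx hy
    exact ⟨a + b, W.add_mem ha hb, map_add φ a b⟩
  | smul r x _ hx =>
    obtain ⟨a, ha, rfl⟩ := hx
    exact ⟨r ^ q • a, W.smul_mem _ ha, hφ r a⟩

end Submodule

section CartierIterate

variable {p : ℕ} {κ : M →+ M}

theorem iterate_map_pow_pow_smul (hκ : ∀ (r : R) (m : M), κ (r ^ p • m) = r • κ m)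
    (e : ℕ) (r : R) (m : M) : (⇑κ)^[e] (r ^ p ^ e • m) = r • (⇑κ)^[e] m := by
  induction e generalizing r with
  | zero => simp
  | succ e ih => rw [iterate_succ_apply', pow_succ', pow_mul, ih, hκ, iterate_succ_apply']

theorem coe_opApply (hκ : ∀ (r : R) (m : M), κ (r ^ p • m) = r • κ m) (f : R) (e ν : ℕ)
    (N : Submodule R M) :
    (opApply κ f e ν N : Set M) = (⇑κ)^[e] '' ((fun m => f ^ ν • m) '' (N : Set M)) :=
  Submodule.coe_span_image_of_map_pow_smul ((show AddMonoid.End M from κ) ^ e) (p ^ e)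
    (iterate_map_pow_pow_smul hκ e) (N.map (LinearMap.lsmul R M (f ^ ν)))

theorem span_image_opApply (hκ : ∀ (r : R) (m : M), κ (r ^ p • m) = r • κ m) (f : R)
    (e ν : ℕ) (N : Submodule R M) :
    Submodule.span R (κ '' opApply κ f e ν N) = opApply κ f (e + 1) ν N := by
  rw [coe_opApply hκ, Set.image_image, opApply, iterate_succ']
  rfl

end CartierIterate

/-- The test module `τ` enters only through its presentation
`τ(M, f^λ) = Σᵢ Σ_{e ≥ e₀} κ^e f^{⌈λp^e⌉} cᵢ Nᵢ` (valid for any `e₀ ≥ 0`),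
where the `cᵢ` form a sequence of test elements and `Nᵢ = H⁰_{ηᵢ}(M)`-underline. -/
theorem kappa_tau_eq_tau_div_p_general (p : ℕ) (hp : p.Prime)
    (κ : M →+ M) (hκ : ∀ (r : R) (m : M), κ (r ^ p • m) = r • κ m)
    (f : R) (τ : ℚ → Submodule R M)
    (n : ℕ) (c : Fin n → R) (Nm : Fin n → Submodule R M)
    (hpres : ∀ lam : ℚ, 0 ≤ lam → ∀ e₀ : ℕ,
      τ lam = ⨆ i : Fin n, ⨆ e : ℕ, ⨆ _ : e₀ ≤ e,
        opApply κ f e (⌈lam * (p : ℚ) ^ e⌉).toNat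
          ((Nm i).map (LinearMap.lsmul R M (c i))))
    (lam : ℚ) (hlam : 0 ≤ lam) :
    Submodule.span R (⇑κ '' (τ lam : Set M)) = τ (lam / p) := by
  have hp0 : (p : ℚ) ≠ 0 := by exact_mod_cast hp.ne_zero
  rw [hpres lam hlam 0, hpres (lam / p) (by positivity) 1]
  simp only [zero_le, iSup_pos, Submodule.span_image_iSup, span_image_opApply hκ]
  refine iSup_congr fun i => ?_
  rw [iSup_ge_eq_iSup_nat_add]
  refine iSup_congr fun e => ?_
  rw [div_mul_eq_mul_div, pow_succ, ← mul_assoc, mul_div_cancel_right₀ _ hp0]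

/-- Lemma 2.1: `κ(τ(M, f^λ)) = τ(M, f^{λ/p})`. The test module filtration `τ` is
axiomatized via its presentation
`τ(M, f^λ) = Σᵢ Σ_{e ≥ e₀} κ^e f^{⌈λp^e⌉} cᵢ Nᵢ` (valid for any `e₀ ≥ 0`),
where the `cᵢ` form a sequence of test elements and `Nᵢ = H⁰_{ηᵢ}(M)`-underline. -/
theorem kappa_tau_eq_tau_div_p (p : ℕ) (hp : p.Prime) [CharP R p]
    (κ : M →+ M) (hκ : ∀ (r : R) (m : M), κ (r ^ p • m) = r • κ m)
    (f : R) (τ : ℚ → Submodule R M)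
    (n : ℕ) (c : Fin n → R) (Nm : Fin n → Submodule R M)
    (hpres : ∀ lam : ℚ, 0 ≤ lam → ∀ e₀ : ℕ,
      τ lam = ⨆ i : Fin n, ⨆ e : ℕ, ⨆ _ : e₀ ≤ e,
        opApply κ f e (⌈lam * (p : ℚ) ^ e⌉).toNat
          ((Nm i).map (LinearMap.lsmul R M (c i))))
    (lam : ℚ) (hlam : 0 ≤ lam) :
    Submodule.span R (⇑κ '' (τ lam : Set M)) = τ (lam / p) :=
  kappa_tau_eq_tau_div_p_general p hp κ hκ f τ n c Nm hpres lam hlam
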